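/- arXiv:1704.08933 — 6 statements merged into one kernel-verified Lean document; each statement's English description precedes it below -/
import Mathlib

section
/- Let (γ(t))_{t≥0} be a stationary stochastic process with values in [ε,∞), ε > 0, and define m_eq(c) = k_in ∫₀^∞ E(exp(-∫₀ˢ γ(cu)du)) ds for k_in > 0. Then m_eq(c) ≥ k_in / E_π(γ) for every c ≥ 0. -/
/-!
Fix `s > 0`. By Fubini and stationarity, `E ∫₀ˢ γ(cu) du = m s`, so Jensen's inequality for `exp`
gives `E exp(-∫₀ˢ γ(cu) du) ≥ exp(-m s)`; integrating over `s ∈ (0, ∞)` yields `1/m`. The lower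
bound `γ ≥ ε > 0` bounds the integrand by `exp(-ε s)`, which makes the outer integral a genuine one
rather than the junk value `0` of a non-integrable function.
-/

open MeasureTheory Set Real Function

theorem Real.exp_neg_integral_le_integral_exp_neg {Ω : Type*} [MeasurableSpace Ω]
    {μ : Measure Ω} [IsProbabilityMeasure μ] {X : Ω → ℝ} (hX : Integrable X μ)
    (hX0 : ∀ᵐ ω ∂μ, 0 ≤ X ω) :
    exp (-∫ ω, X ω ∂μ) ≤ ∫ ω, exp (-X ω) ∂μ := by
  have hexp : Integrable (fun ω => exp (-X ω)) μ := by
    refine Integrable.mono' (integrable_const 1)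
      (continuous_exp.comp_aestronglyMeasurable hX.aestronglyMeasurable.neg) ?_
    filter_upwards [hX0] with ω hω
    simpa [Real.norm_eq_abs, abs_of_pos (exp_pos _)] using hω
  rw [← integral_neg]
  exact convexOn_exp.map_integral_le continuousOn_exp isClosed_univ (by simp) hX.neg hexp

section

variable {Ω : Type*} [MeasurableSpace Ω] {μ : Measure Ω} {f : ℝ → Ω → ℝ} {m : ℝ}

theorem integrable_uncurry_restrict_Ioc_prod [SFinite μ] (hf : Measurable (uncurry f))
    (hf0 : ∀ u ω, 0 ≤ f u ω) (hfi : ∀ u, Integrable (f u) μ) (hm : ∀ u, ∫ ω, f u ω ∂μ = m)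
    (s : ℝ) : Integrable (uncurry f) ((volume.restrict (Ioc 0 s)).prod μ) := by
  rw [integrable_prod_iff hf.aestronglyMeasurable]
  refine ⟨ae_of_all _ hfi, ?_⟩
  simp only [uncurry_apply_pair, norm_of_nonneg (hf0 _ _), hm]
  exact integrable_const m

theorem integral_setIntegral_Ioc_eq_mul [SFinite μ] (hf : Measurable (uncurry f))
    (hf0 : ∀ u ω, 0 ≤ f u ω) (hfi : ∀ u, Integrable (f u) μ) (hm : ∀ u, ∫ ω, f u ω ∂μ = m)
    {s : ℝ} (hs : 0 ≤ s) : ∫ ω, (∫ u in Ioc 0 s, f u ω) ∂μ = m * s := by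
  rw [← integral_integral_swap (integrable_uncurry_restrict_Ioc_prod hf hf0 hfi hm s)]
  simp [hm, hs, mul_comm]

theorem stronglyMeasurable_setIntegral_Ioc (hf : Measurable (uncurry f)) :
    StronglyMeasurable fun p : ℝ × Ω => ∫ u in Ioc 0 p.1, f u p.2 := by
  simp_rw [← integral_indicator measurableSet_Ioc]
  have hS : MeasurableSet {q : (ℝ × Ω) × ℝ | q.2 ∈ Ioc 0 q.1.1} :=
    (measurableSet_lt measurable_const measurable_snd).inter
      (measurableSet_le measurable_snd (measurable_fst.comp measurable_fst))
  have hind := (hf.comp (measurable_snd.prodMk (measurable_snd.comp measurable_fst))).indicator hS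
  exact hind.stronglyMeasurable.integral_prod_right'

noncomputable def expectedSurvival (μ : Measure Ω) (f : ℝ → Ω → ℝ) (s : ℝ) : ℝ :=
  ∫ ω, exp (-∫ u in Ioc 0 s, f u ω) ∂μ

theorem expectedSurvival_nonneg (s : ℝ) : 0 ≤ expectedSurvival μ f s :=
  integral_nonneg fun _ => (exp_pos _).le

theorem stronglyMeasurable_expectedSurvival [SFinite μ] (hf : Measurable (uncurry f)) :
    StronglyMeasurable (expectedSurvival μ f) :=
  (continuous_exp.comp_stronglyMeasurable
    (stronglyMeasurable_setIntegral_Ioc hf).neg).integral_prod_right'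

theorem exp_neg_mul_le_expectedSurvival [IsProbabilityMeasure μ] (hf : Measurable (uncurry f))
    (hf0 : ∀ u ω, 0 ≤ f u ω) (hfi : ∀ u, Integrable (f u) μ) (hm : ∀ u, ∫ ω, f u ω ∂μ = m)
    {s : ℝ} (hs : 0 ≤ s) : exp (-(m * s)) ≤ expectedSurvival μ f s := by
  rw [← integral_setIntegral_Ioc_eq_mul hf hf0 hfi hm hs]
  exact exp_neg_integral_le_integral_exp_neg
    (integrable_uncurry_restrict_Ioc_prod hf hf0 hfi hm s).integral_prod_right
    (ae_of_all _ fun ω => setIntegral_nonneg measurableSet_Ioc fun u _ => hf0 u ω)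

theorem expectedSurvival_le_exp_neg_mul [IsProbabilityMeasure μ] {ε : ℝ} (hε : 0 ≤ ε)
    (hf : Measurable (uncurry f)) (hεf : ∀ u ω, ε ≤ f u ω) (hfi : ∀ u, Integrable (f u) μ)
    (hm : ∀ u, ∫ ω, f u ω ∂μ = m) {s : ℝ} (hs : 0 ≤ s) :
    expectedSurvival μ f s ≤ exp (-(ε * s)) := by
  have hf0 u ω : 0 ≤ f u ω := hε.trans (hεf u ω)
  have hpath : ∀ᵐ ω ∂μ, IntegrableOn (f · ω) (Ioc 0 s) :=
    (integrable_uncurry_restrict_Ioc_prod hf hf0 hfi hm s).prod_left_ae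
  have hbound : ∀ᵐ ω ∂μ, exp (-∫ u in Ioc 0 s, f u ω) ≤ exp (-(ε * s)) := by
    filter_upwards [hpath] with ω hω
    gcongr
    calc ε * s = ∫ _ in Ioc 0 s, ε := by simp [hs, mul_comm]
      _ ≤ ∫ u in Ioc 0 s, f u ω :=
        setIntegral_mono (integrableOn_const (by simp)) hω fun u => hεf u ω
  calc expectedSurvival μ f s ≤ ∫ _, exp (-(ε * s)) ∂μ :=
        integral_mono_of_nonneg (ae_of_all _ fun _ => (exp_pos _).le) (integrable_const _) hbound
    _ = exp (-(ε * s)) := by simp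

theorem inv_le_integral_expectedSurvival [IsProbabilityMeasure μ] {ε : ℝ} (hε : 0 < ε)
    (hf : Measurable (uncurry f)) (hεf : ∀ u ω, ε ≤ f u ω) (hfi : ∀ u, Integrable (f u) μ)
    (hm : ∀ u, ∫ ω, f u ω ∂μ = m) : m⁻¹ ≤ ∫ s in Ioi 0, expectedSurvival μ f s := by
  have hf0 u ω : 0 ≤ f u ω := hε.le.trans (hεf u ω)
  have hεm : ε ≤ m := by
    simpa [hm 0] using integral_mono (integrable_const ε) (hfi 0) (hεf 0)
  have hm_pos : 0 < m := hε.trans_le hεm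
  have hexp_m : IntegrableOn (fun s => exp (-(m * s))) (Ioi 0) := by
    simpa [neg_mul] using exp_neg_integrableOn_Ioi 0 hm_pos
  have hsurv : IntegrableOn (expectedSurvival μ f) (Ioi 0) := by
    have hexp_ε : IntegrableOn (fun s => exp (-(ε * s))) (Ioi 0) := by
      simpa [neg_mul] using exp_neg_integrableOn_Ioi 0 hε
    refine Integrable.mono' hexp_ε
      (stronglyMeasurable_expectedSurvival hf).aestronglyMeasurable ?_
    refine (ae_restrict_iff' measurableSet_Ioi).2 (ae_of_all _ fun s hs => ?_)
    rw [norm_of_nonneg (expectedSurvival_nonneg s)]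
    exact expectedSurvival_le_exp_neg_mul hε.le hf hεf hfi hm (le_of_lt hs)
  calc m⁻¹ = ∫ s in Ioi 0, exp (-(m * s)) := by
        simpa [neg_mul, neg_div, div_neg] using (integral_exp_mul_Ioi (neg_lt_zero.2 hm_pos) 0).symm
    _ ≤ ∫ s in Ioi 0, expectedSurvival μ f s :=
        setIntegral_mono_on hexp_m hsurv measurableSet_Ioi fun s hs =>
          exp_neg_mul_le_expectedSurvival hf hf0 hfi hm (le_of_lt hs)

end

/-- Enzymatic fluctuations always amplify the mean substrate abundance: for every
relative speed `c ≥ 0`, `m_eq(c) ≥ k_in / E_π(γ)`. -/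
theorem meq_ge_det {Ω : Type*} [MeasurableSpace Ω]
    (μ : Measure Ω) [IsProbabilityMeasure μ]
    (γ : ℝ → Ω → ℝ) (ε : ℝ) (hε : 0 < ε)
    (hmeas : Measurable (Function.uncurry γ))
    (hlb : ∀ t ω, ε ≤ γ t ω)
    (m : ℝ) (hstat : ∀ u : ℝ, ∫ ω, γ u ω ∂μ = m)
    (kin : ℝ) (hkin : 0 < kin)
    (meq : ℝ → ℝ)
    (hmeq : ∀ c, meq c =
      kin * ∫ s in Set.Ioi (0:ℝ), ∫ ω, Real.exp (-∫ u in (0:ℝ)..s, γ (c * u) ω) ∂μ) :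
    ∀ c : ℝ, 0 ≤ c → kin / m ≤ meq c := by
  intro c _
  have hmeq_eq : meq c = kin * ∫ s in Ioi 0, expectedSurvival μ (fun u ω => γ (c * u) ω) s := by
    rw [hmeq]
    congr 1
    refine setIntegral_congr_fun measurableSet_Ioi fun s hs => ?_
    simp only [expectedSurvival, intervalIntegral.integral_of_le (le_of_lt hs)]
  rcases le_or_gt m 0 with hm | hm
  · rw [hmeq_eq]
    exact (div_nonpos_of_nonneg_of_nonpos hkin.le hm).trans (mul_nonneg hkin.le
      (setIntegral_nonneg measurableSet_Ioi fun s _ => expectedSurvival_nonneg s))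
  have hγi u : Integrable (γ u) μ := .of_integral_ne_zero (by rw [hstat]; exact hm.ne')
  rw [hmeq_eq, div_eq_mul_inv]
  gcongr
  exact inv_le_integral_expectedSurvival hε
    (hmeas.comp ((measurable_fst.const_mul c).prodMk measurable_snd))
    (fun u ω => hlb _ ω) (fun u => hγi _) (fun u => hstat _)
end

section
/- Let (γ(t))_{t≥0} be a stationary ergodic process with values in [ε,∞), ε > 0, and mean E_π(γ). Then lim_{c→∞} ∫₀^∞ E(exp(-∫₀ˢ γ(cu)du)) ds = 1/E_π(γ). -/
/-!
Substituting `u ↦ u / c` turns the exponent into `s` times the time average of `γ(·, ω)` over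
`[0, c s]`, which tends to `m s` for almost every `ω`. Dominated convergence in `ω` (bound `1`)
and then in `s` (bound `exp (-ε s)`, since `γ ≥ ε`) gives the limit `∫₀^∞ exp (-m s) ds = m⁻¹`.

Because `γ ≥ ε`, a nonzero limit of the time averages forces local integrability of almost every
path, hence `m ≥ ε`. If `m = 0`, almost every path is not locally integrable, so its interval
integrals are eventually the junk value `0`; the outer integrand then tends to `1`, is not
integrable, and the outer integral is the junk value `0 = 0⁻¹`.
-/

open MeasureTheory Filter Set Topology

theorem MeasureTheory.StronglyMeasurable.setIntegral_prod_right
    {X Y E : Type*} [MeasurableSpace X] [MeasurableSpace Y] [NormedAddCommGroup E]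
    [NormedSpace ℝ E] {ν : Measure Y} [SFinite ν] {f : X × Y → E} (hf : StronglyMeasurable f)
    {S : Set (X × Y)} (hS : MeasurableSet S) :
    StronglyMeasurable fun x => ∫ y in Prod.mk x ⁻¹' S, f (x, y) ∂ν := by
  simp_rw [← integral_indicator (measurable_prodMk_left hS)]
  exact (hf.indicator hS).integral_prod_right'

theorem stronglyMeasurable_intervalIntegral_prod {Ω : Type*} [MeasurableSpace Ω]
    {f : ℝ → Ω → ℝ} (hf : Measurable (Function.uncurry f)) (a : ℝ) :
    StronglyMeasurable fun p : ℝ × Ω => ∫ u in a..p.1, f u p.2 := by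
  have hF : StronglyMeasurable fun q : (ℝ × Ω) × ℝ => f q.2 q.1.2 :=
    (hf.comp (measurable_snd.prodMk (measurable_snd.comp measurable_fst))).stronglyMeasurable
  have hIoc : ∀ l r : ℝ × Ω → ℝ, Measurable l → Measurable r →
      StronglyMeasurable fun p : ℝ × Ω => ∫ u in Ioc (l p) (r p), f u p.2 := fun l r hl hr =>
    hF.setIntegral_prod_right <| (measurableSet_lt (hl.comp measurable_fst) measurable_snd).inter
      (measurableSet_le measurable_snd (hr.comp measurable_fst))
  exact (hIoc _ _ measurable_const measurable_fst).sub (hIoc _ _ measurable_fst measurable_const)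

theorem intervalIntegral_comp_mul_left_zero (g : ℝ → ℝ) {c : ℝ} (hc : c ≠ 0) (s : ℝ) :
    ∫ u in (0:ℝ)..s, g (c * u) = c⁻¹ * ∫ u in (0:ℝ)..c * s, g u := by
  simp [intervalIntegral.integral_comp_mul_left g hc]

theorem not_integrableOn_Ioi_of_tendsto {E : Type*} [NormedAddCommGroup E] {f : ℝ → E}
    {L : E} (hL : L ≠ 0) (hf : Tendsto f atTop (𝓝 L)) (a : ℝ) : ¬IntegrableOn f (Ioi a) :=
  fun hint => hL <| IntegrableAtFilter.eq_zero_of_tendsto ⟨Ioi a, Ioi_mem_atTop a, hint⟩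
    (fun s hs => by
      obtain ⟨b, hb⟩ := mem_atTop_sets.1 hs
      exact measure_mono_top hb Real.volume_Ici) hf

theorem integral_exp_neg_mul_Ioi_zero {m : ℝ} (hm : 0 < m) :
    ∫ s in Ioi (0:ℝ), Real.exp (-(m * s)) = m⁻¹ := by
  have := integral_comp_mul_left_Ioi (fun x => Real.exp (-x)) 0 hm
  simp only [mul_zero] at this
  rw [this, integral_exp_neg_Ioi_zero, smul_eq_mul, mul_one]

section TimeAverage

variable {g : ℝ → ℝ} {ε m : ℝ}

theorem tendsto_intervalIntegral_comp_mul_atTop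
    (hg : Tendsto (fun T => (∫ u in (0:ℝ)..T, g u) / T) atTop (𝓝 m)) {s : ℝ} (hs : 0 < s) :
    Tendsto (fun c => ∫ u in (0:ℝ)..s, g (c * u)) atTop (𝓝 (m * s)) := by
  have hlim := (hg.comp (tendsto_id.atTop_mul_const hs)).mul_const s
  refine hlim.congr' ?_
  filter_upwards [eventually_gt_atTop 0] with c hc
  rw [intervalIntegral_comp_mul_left_zero g hc.ne']
  simp only [Function.comp_apply, id]
  field_simp

theorem mul_le_intervalIntegral {T : ℝ} (hT : 0 ≤ T) (hg : ∀ u ∈ Icc 0 T, ε ≤ g u)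
    (hint : IntervalIntegrable g volume 0 T) : ε * T ≤ ∫ u in (0:ℝ)..T, g u := by
  simpa [mul_comm] using
    intervalIntegral.integral_mono_on hT intervalIntegrable_const hint hg

theorem le_of_tendsto_intervalIntegral_div (hg : ∀ u, ε ≤ g u)
    (hint : ∀ T, 0 ≤ T → IntervalIntegrable g volume 0 T)
    (hlim : Tendsto (fun T => (∫ u in (0:ℝ)..T, g u) / T) atTop (𝓝 m)) : ε ≤ m := by
  refine ge_of_tendsto hlim ?_
  filter_upwards [eventually_gt_atTop 0] with T hT
  rw [le_div_iff₀ hT]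
  exact mul_le_intervalIntegral hT.le (fun u _ => hg u) (hint T hT.le)

theorem forall_intervalIntegrable_or_eventually_intervalIntegral_eq_zero (g : ℝ → ℝ) :
    (∀ T, 0 ≤ T → IntervalIntegrable g volume 0 T) ∨
      ∀ᶠ T in atTop, ∫ u in (0:ℝ)..T, g u = 0 := by
  refine or_iff_not_imp_left.2 fun h => ?_
  push Not at h
  obtain ⟨T₀, hT₀, hnot⟩ := h
  filter_upwards [eventually_ge_atTop T₀] with T hT
  refine intervalIntegral.integral_undef fun hint => hnot (hint.mono_set ?_)
  rw [uIcc_of_le hT₀, uIcc_of_le (hT₀.trans hT)]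
  exact Icc_subset_Icc_right hT

theorem forall_intervalIntegrable_of_tendsto_intervalIntegral_div
    (hlim : Tendsto (fun T => (∫ u in (0:ℝ)..T, g u) / T) atTop (𝓝 m)) (hm : m ≠ 0) :
    ∀ T, 0 ≤ T → IntervalIntegrable g volume 0 T := by
  refine (forall_intervalIntegrable_or_eventually_intervalIntegral_eq_zero g).resolve_right
    fun hzero => hm (tendsto_nhds_unique hlim (tendsto_const_nhds.congr' ?_))
  filter_upwards [hzero] with T hT
  rw [hT, zero_div]

theorem eventually_intervalIntegral_eq_zero_of_tendsto_intervalIntegral_div (hε : 0 < ε)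
    (hg : ∀ u, ε ≤ g u)
    (hlim : Tendsto (fun T => (∫ u in (0:ℝ)..T, g u) / T) atTop (𝓝 0)) :
    ∀ᶠ T in atTop, ∫ u in (0:ℝ)..T, g u = 0 :=
  (forall_intervalIntegrable_or_eventually_intervalIntegral_eq_zero g).resolve_left
    fun hint => hε.not_ge (le_of_tendsto_intervalIntegral_div hg hint hlim)

theorem norm_exp_neg_intervalIntegral_le_one (hg : ∀ u, 0 ≤ g u) {s : ℝ} (hs : 0 ≤ s) :
    ‖Real.exp (-∫ u in (0:ℝ)..s, g u)‖ ≤ 1 := by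
  rw [Real.norm_of_nonneg (Real.exp_pos _).le, Real.exp_le_one_iff, neg_nonpos]
  exact intervalIntegral.integral_nonneg hs fun u _ => hg u

end TimeAverage

section Expectation

variable {Ω : Type*} [MeasurableSpace Ω] {μ : Measure Ω} [IsProbabilityMeasure μ]
  {γ : ℝ → Ω → ℝ} {ε m : ℝ}

theorem stronglyMeasurable_exp_neg_intervalIntegral_comp_mul
    (hmeas : Measurable (Function.uncurry γ)) (c : ℝ) :
    StronglyMeasurable fun p : ℝ × Ω => Real.exp (-∫ u in (0:ℝ)..p.1, γ (c * u) p.2) :=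
  (Real.continuous_exp.comp continuous_neg).comp_stronglyMeasurable <|
    stronglyMeasurable_intervalIntegral_prod
      (f := fun u ω => γ (c * u) ω)
      (hmeas.comp ((measurable_const.mul measurable_fst).prodMk measurable_snd)) 0

theorem integrable_exp_neg_intervalIntegral_comp_mul (hmeas : Measurable (Function.uncurry γ))
    (hγ : ∀ t ω, 0 ≤ γ t ω) (c : ℝ) {s : ℝ} (hs : 0 ≤ s) :
    Integrable (fun ω => Real.exp (-∫ u in (0:ℝ)..s, γ (c * u) ω)) μ :=
  Integrable.mono' (integrable_const 1)
    ((stronglyMeasurable_exp_neg_intervalIntegral_comp_mul hmeas c).comp_measurable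
      measurable_prodMk_left).aestronglyMeasurable
    (ae_of_all _ fun ω => norm_exp_neg_intervalIntegral_le_one (fun _ => hγ _ ω) hs)

theorem tendsto_integral_exp_neg_intervalIntegral_comp_mul
    (hmeas : Measurable (Function.uncurry γ)) (hγ : ∀ t ω, 0 ≤ γ t ω)
    (hergodic : ∀ᵐ ω ∂μ,
      Tendsto (fun T : ℝ => (∫ u in (0:ℝ)..T, γ u ω) / T) atTop (𝓝 m)) {s : ℝ} (hs : 0 < s) :
    Tendsto (fun c => ∫ ω, Real.exp (-∫ u in (0:ℝ)..s, γ (c * u) ω) ∂μ) atTop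
      (𝓝 (Real.exp (-(m * s)))) := by
  have hlim := tendsto_integral_filter_of_dominated_convergence (μ := μ) (fun _ => 1)
    (Eventually.of_forall fun c =>
      (integrable_exp_neg_intervalIntegral_comp_mul hmeas hγ c hs.le).aestronglyMeasurable)
    (Eventually.of_forall fun c =>
      ae_of_all _ fun ω => norm_exp_neg_intervalIntegral_le_one (fun _ => hγ _ ω) hs.le)
    (integrable_const 1)
    (hergodic.mono fun ω hω =>
      (Real.continuous_exp.tendsto _).comp (tendsto_intervalIntegral_comp_mul_atTop hω hs).neg)
  simpa using hlim

theorem norm_integral_exp_neg_intervalIntegral_comp_mul_le (hlb : ∀ t ω, ε ≤ γ t ω)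
    (hint : ∀ᵐ ω ∂μ, ∀ T, 0 ≤ T → IntervalIntegrable (γ · ω) volume 0 T) {c s : ℝ}
    (hc : 0 < c) (hs : 0 ≤ s) :
    ‖∫ ω, Real.exp (-∫ u in (0:ℝ)..s, γ (c * u) ω) ∂μ‖ ≤ Real.exp (-ε * s) := by
  have hlower : ∀ᵐ ω ∂μ, ε * s ≤ ∫ u in (0:ℝ)..s, γ (c * u) ω := by
    filter_upwards [hint] with ω hω
    rw [intervalIntegral_comp_mul_left_zero (γ · ω) hc.ne', le_inv_mul_iff₀ hc, mul_left_comm]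
    exact mul_le_intervalIntegral (by positivity) (fun u _ => hlb u ω) (hω _ (by positivity))
  rw [Real.norm_of_nonneg (integral_nonneg fun ω => (Real.exp_pos _).le)]
  calc ∫ ω, Real.exp (-∫ u in (0:ℝ)..s, γ (c * u) ω) ∂μ
      ≤ ∫ _, Real.exp (-ε * s) ∂μ :=
        integral_mono_of_nonneg (ae_of_all _ fun ω => (Real.exp_pos _).le) (integrable_const _)
          (hlower.mono fun ω hω => by rw [neg_mul]; exact Real.exp_le_exp.2 (neg_le_neg hω))
    _ = Real.exp (-ε * s) := by simp

theorem tendsto_integral_Ioi_integral_exp_neg_of_ne_zero (hε : 0 < ε)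
    (hmeas : Measurable (Function.uncurry γ)) (hlb : ∀ t ω, ε ≤ γ t ω)
    (hergodic : ∀ᵐ ω ∂μ,
      Tendsto (fun T : ℝ => (∫ u in (0:ℝ)..T, γ u ω) / T) atTop (𝓝 m)) (hm : m ≠ 0) :
    Tendsto (fun c => ∫ s in Ioi (0:ℝ), ∫ ω, Real.exp (-∫ u in (0:ℝ)..s, γ (c * u) ω) ∂μ)
      atTop (𝓝 m⁻¹) := by
  have hγ : ∀ t ω, 0 ≤ γ t ω := fun t ω => hε.le.trans (hlb t ω)
  have hint : ∀ᵐ ω ∂μ, ∀ T, 0 ≤ T → IntervalIntegrable (γ · ω) volume 0 T :=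
    hergodic.mono fun ω hω => forall_intervalIntegrable_of_tendsto_intervalIntegral_div hω hm
  have hεm : ε ≤ m := by
    obtain ⟨ω, hω, hωint⟩ := (hergodic.and hint).exists
    exact le_of_tendsto_intervalIntegral_div (fun u => hlb u ω) hωint hω
  have hlim := tendsto_integral_filter_of_dominated_convergence (fun s => Real.exp (-ε * s))
    (Eventually.of_forall fun c =>
      (stronglyMeasurable_exp_neg_intervalIntegral_comp_mul hmeas c).integral_prod_right' (ν := μ)
        |>.aestronglyMeasurable)
    ((eventually_gt_atTop 0).mono fun c hc =>
      (ae_restrict_mem measurableSet_Ioi).mono fun s hs =>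
        norm_integral_exp_neg_intervalIntegral_comp_mul_le hlb hint hc hs.le)
    (exp_neg_integrableOn_Ioi 0 hε)
    ((ae_restrict_mem measurableSet_Ioi).mono fun s hs =>
      tendsto_integral_exp_neg_intervalIntegral_comp_mul hmeas hγ hergodic hs)
  rwa [integral_exp_neg_mul_Ioi_zero (hε.trans_le hεm)] at hlim

theorem tendsto_integral_Ioi_integral_exp_neg_of_zero (hε : 0 < ε)
    (hmeas : Measurable (Function.uncurry γ)) (hlb : ∀ t ω, ε ≤ γ t ω)
    (hergodic : ∀ᵐ ω ∂μ,
      Tendsto (fun T : ℝ => (∫ u in (0:ℝ)..T, γ u ω) / T) atTop (𝓝 0)) :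
    Tendsto (fun c => ∫ s in Ioi (0:ℝ), ∫ ω, Real.exp (-∫ u in (0:ℝ)..s, γ (c * u) ω) ∂μ)
      atTop (𝓝 0) := by
  have hγ : ∀ t ω, 0 ≤ γ t ω := fun t ω => hε.le.trans (hlb t ω)
  refine tendsto_const_nhds.congr' ?_
  filter_upwards [eventually_gt_atTop 0] with c hc
  have hone : ∀ᵐ ω ∂μ, ∀ᶠ s in atTop, Real.exp (-∫ u in (0:ℝ)..s, γ (c * u) ω) = 1 := by
    filter_upwards [hergodic] with ω hω
    have hscale : Tendsto (c * ·) atTop atTop := tendsto_id.const_mul_atTop hc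
    filter_upwards [hscale.eventually
      (eventually_intervalIntegral_eq_zero_of_tendsto_intervalIntegral_div hε (hlb · ω) hω)]
      with s hs
    rw [intervalIntegral_comp_mul_left_zero (γ · ω) hc.ne', hs, mul_zero, neg_zero, Real.exp_zero]
  have hlim := tendsto_integral_filter_of_dominated_convergence (μ := μ) (l := atTop)
    (f := fun _ => 1) (fun _ => 1)
    ((eventually_ge_atTop 0).mono fun s hs =>
      (integrable_exp_neg_intervalIntegral_comp_mul hmeas hγ c hs).aestronglyMeasurable)
    ((eventually_ge_atTop 0).mono fun s hs =>
      ae_of_all _ fun ω => norm_exp_neg_intervalIntegral_le_one (fun _ => hγ _ ω) hs)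
    (integrable_const 1)
    (hone.mono fun ω hω => tendsto_const_nhds.congr' (hω.mono fun s hs => hs.symm))
  exact (integral_undef (not_integrableOn_Ioi_of_tendsto one_ne_zero (by simpa using hlim) 0)).symm

end Expectation

theorem meq_det_limit_general {Ω : Type*} [MeasurableSpace Ω]
    (μ : Measure Ω) [IsProbabilityMeasure μ]
    (γ : ℝ → Ω → ℝ) (ε : ℝ) (hε : 0 < ε)
    (hmeas : Measurable (Function.uncurry γ))
    (hlb : ∀ t ω, ε ≤ γ t ω)
    (m : ℝ)
    (hergodic : ∀ᵐ ω ∂μ,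
      Tendsto (fun T : ℝ => (∫ u in (0:ℝ)..T, γ u ω) / T) atTop (nhds m)) :
    Tendsto (fun c : ℝ =>
        ∫ s in Set.Ioi (0:ℝ), ∫ ω, Real.exp (-∫ u in (0:ℝ)..s, γ (c * u) ω) ∂μ)
      atTop (nhds m⁻¹) := by
  rcases eq_or_ne m 0 with rfl | hm
  · rw [inv_zero]
    exact tendsto_integral_Ioi_integral_exp_neg_of_zero hε hmeas hlb hergodic
  · exact tendsto_integral_Ioi_integral_exp_neg_of_ne_zero hε hmeas hlb hergodic hm

/-- In the deterministic limit `c → ∞` (vanishing dynamic disorder), the steady-state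
integral converges to `1/E_π(γ)`, the ergodic theorem providing a.s. convergence of
time averages. -/
theorem meq_det_limit {Ω : Type*} [MeasurableSpace Ω]
    (μ : Measure Ω) [IsProbabilityMeasure μ]
    (γ : ℝ → Ω → ℝ) (ε : ℝ) (hε : 0 < ε)
    (hmeas : Measurable (Function.uncurry γ))
    (hlb : ∀ t ω, ε ≤ γ t ω)
    (m : ℝ) (hstat : ∀ u : ℝ, ∫ ω, γ u ω ∂μ = m)
    (hergodic : ∀ᵐ ω ∂μ,
      Tendsto (fun T : ℝ => (∫ u in (0:ℝ)..T, γ u ω) / T) atTop (nhds m)) :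
    Tendsto (fun c : ℝ =>
        ∫ s in Set.Ioi (0:ℝ), ∫ ω, Real.exp (-∫ u in (0:ℝ)..s, γ (c * u) ω) ∂μ)
      atTop (nhds m⁻¹) :=
  meq_det_limit_general μ γ ε hε hmeas hlb m hergodic
end

section
/- Let Q be an irreducible n×n transition rate matrix with stationary distribution π, D = Diag(γ₁,...,γₙ) with γᵢ > 0, and c ≥ 0. Then πᵀ(D - cQ)⁻¹𝟙 ≤ πᵀD⁻¹𝟙, i.e., the steady-state mean m_eq(c) = k_in·πᵀ(D - cQ)⁻¹𝟙 is at most the static value k_in·Σᵢ πᵢ/γᵢ. -/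
open Matrix

def IsIrreducibleRateMatrix {n : ℕ} (Q : Matrix (Fin n) (Fin n) ℝ) : Prop :=
  ∀ S : Finset (Fin n), S.Nonempty → S ≠ Finset.univ → ∃ i ∈ S, ∃ j, j ∉ S ∧ Q i j ≠ 0

/-!
Put `x = (D - cQ)⁻¹𝟙`, so `γᵢxᵢ - c(Qx)ᵢ = 1`. Pairing with `πᵢxᵢ` gives
`πᵀx = Σᵢ γᵢπᵢxᵢ² - c·Σᵢⱼ πᵢQᵢⱼxᵢxⱼ`, and the double sum is `-½ Σᵢⱼ πᵢQᵢⱼ(xᵢ - xⱼ)² ≤ 0`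
because `Q𝟙 = 0` and `πᵀQ = 0`. Hence `Σᵢ γᵢπᵢxᵢ² ≤ πᵀx`, while Cauchy–Schwarz gives
`(πᵀx)² ≤ (Σᵢ γᵢπᵢxᵢ²)(Σᵢ πᵢ/γᵢ)`; together `πᵀx ≤ Σᵢ πᵢ/γᵢ`.
-/

open Finset

variable {ι : Type*} [Fintype ι]

theorem sum_sum_mul_sub_sq_eq_neg_two_mul (Q : Matrix ι ι ℝ) (π x : ι → ℝ)
    (hrow : ∀ i, ∑ j, Q i j = 0) (hcol : ∀ j, ∑ i, π i * Q i j = 0) :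
    ∑ i, ∑ j, π i * Q i j * (x i - x j) ^ 2 = -2 * ∑ i, ∑ j, π i * Q i j * x i * x j := by
  have hleft : ∑ i, ∑ j, π i * Q i j * x i ^ 2 = 0 := by
    simp_rw [← Finset.sum_mul, ← Finset.mul_sum, hrow, mul_zero, zero_mul, sum_const_zero]
  have hright : ∑ i, ∑ j, π i * Q i j * x j ^ 2 = 0 := by
    rw [Finset.sum_comm]
    simp_rw [← Finset.sum_mul, hcol, zero_mul, sum_const_zero]
  calc ∑ i, ∑ j, π i * Q i j * (x i - x j) ^ 2
      = ∑ i, ∑ j, π i * Q i j * x i ^ 2 - 2 * ∑ i, ∑ j, π i * Q i j * x i * x j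
          + ∑ i, ∑ j, π i * Q i j * x j ^ 2 := by
        simp only [Finset.mul_sum, ← Finset.sum_sub_distrib, ← Finset.sum_add_distrib]
        exact sum_congr rfl fun i _ => sum_congr rfl fun j _ => by ring
    _ = -2 * ∑ i, ∑ j, π i * Q i j * x i * x j := by rw [hleft, hright]; ring

theorem stationary_rate_quadForm_nonpos (Q : Matrix ι ι ℝ) (π x : ι → ℝ)
    (hoff : ∀ i j, i ≠ j → 0 ≤ Q i j) (hπ : ∀ i, 0 ≤ π i)
    (hrow : ∀ i, ∑ j, Q i j = 0) (hcol : ∀ j, ∑ i, π i * Q i j = 0) :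
    ∑ i, ∑ j, π i * Q i j * x i * x j ≤ 0 := by
  have hsq : 0 ≤ ∑ i, ∑ j, π i * Q i j * (x i - x j) ^ 2 := by
    refine sum_nonneg fun i _ => sum_nonneg fun j _ => ?_
    rcases eq_or_ne i j with rfl | hij
    · simp
    · exact mul_nonneg (mul_nonneg (hπ i) (hoff i j hij)) (sq_nonneg _)
  rw [sum_sum_mul_sub_sq_eq_neg_two_mul Q π x hrow hcol] at hsq
  linarith

theorem sum_mul_sq_le_dotProduct_of_mulVec_eq_one [DecidableEq ι] (Q : Matrix ι ι ℝ)
    (γ π x : ι → ℝ)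
    (hoff : ∀ i j, i ≠ j → 0 ≤ Q i j) (hπ : ∀ i, 0 ≤ π i)
    (hrow : ∀ i, ∑ j, Q i j = 0) (hcol : ∀ j, ∑ i, π i * Q i j = 0)
    {c : ℝ} (hc : 0 ≤ c) (hx : (diagonal γ - c • Q) *ᵥ x = fun _ => 1) :
    ∑ i, γ i * π i * x i ^ 2 ≤ π ⬝ᵥ x := by
  have hxi (i : ι) : γ i * x i - c * (Q *ᵥ x) i = 1 := by
    simpa only [sub_mulVec, smul_mulVec, mulVec_diagonal, Pi.sub_apply, Pi.smul_apply,
      smul_eq_mul] using congrFun hx i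
  have hdot : π ⬝ᵥ x = ∑ i, γ i * π i * x i ^ 2 - c * ∑ i, ∑ j, π i * Q i j * x i * x j := by
    rw [dotProduct, Finset.mul_sum, ← sum_sub_distrib]
    refine sum_congr rfl fun i _ => ?_
    have hrowi : ∑ j, π i * Q i j * x i * x j = π i * x i * (Q *ᵥ x) i := by
      rw [mulVec, dotProduct, Finset.mul_sum]; exact sum_congr rfl fun j _ => by ring
    rw [hrowi]
    linear_combination (-(π i * x i)) * hxi i
  have hS := stationary_rate_quadForm_nonpos Q π x hoff hπ hrow hcol
  rw [hdot]
  linarith [mul_nonpos_of_nonneg_of_nonpos hc hS]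

theorem dotProduct_le_sum_div_of_sum_mul_sq_le {γ π x : ι → ℝ}
    (hγ : ∀ i, 0 < γ i) (hπ : ∀ i, 0 ≤ π i)
    (h : ∑ i, γ i * π i * x i ^ 2 ≤ π ⬝ᵥ x) : π ⬝ᵥ x ≤ ∑ i, π i / γ i := by
  have hG : 0 ≤ ∑ i, π i / γ i := sum_nonneg fun i _ => div_nonneg (hπ i) (hγ i).le
  have hCS : (π ⬝ᵥ x) ^ 2 ≤ (∑ i, γ i * π i * x i ^ 2) * ∑ i, π i / γ i :=
    sum_sq_le_sum_mul_sum_of_sq_le_mul _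
      (fun i _ => mul_nonneg (mul_nonneg (hγ i).le (hπ i)) (sq_nonneg _))
      (fun i _ => div_nonneg (hπ i) (hγ i).le)
      (fun i _ => le_of_eq (by field_simp [(hγ i).ne']))
  rcases le_or_gt (π ⬝ᵥ x) 0 with hneg | hpos
  · linarith
  · refine le_of_mul_le_mul_left ?_ hpos
    calc π ⬝ᵥ x * π ⬝ᵥ x = (π ⬝ᵥ x) ^ 2 := (sq _).symm
      _ ≤ (∑ i, γ i * π i * x i ^ 2) * ∑ i, π i / γ i := hCS
      _ ≤ π ⬝ᵥ x * ∑ i, π i / γ i := by gcongr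

theorem meq_le_static_general {n : ℕ} (Q : Matrix (Fin n) (Fin n) ℝ) (γ π : Fin n → ℝ)
    (hoff : ∀ i j, i ≠ j → 0 ≤ Q i j) (hrow : ∀ i, ∑ j, Q i j = 0)
    (hγ : ∀ i, 0 < γ i)
    (hπ : ∀ i, 0 ≤ π i)
    (hπstat : ∀ j, ∑ i, π i * Q i j = 0)
    (c : ℝ) (hc : 0 ≤ c) :
    π ⬝ᵥ ((Matrix.diagonal γ - c • Q)⁻¹ *ᵥ fun _ => 1) ≤ ∑ i, π i / γ i := by
  set A := diagonal γ - c • Q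
  by_cases hA : IsUnit A.det
  · have hx : A *ᵥ (A⁻¹ *ᵥ fun _ => 1) = fun _ => 1 := by
      rw [mulVec_mulVec, mul_nonsing_inv _ hA, one_mulVec]
    exact dotProduct_le_sum_div_of_sum_mul_sq_le hγ hπ
      (sum_mul_sq_le_dotProduct_of_mulVec_eq_one Q γ π _ hoff hπ hrow hπstat hc hx)
  -- `A` is in fact strictly diagonally dominant, but the junk value `A⁻¹ = 0` obeys the bound too.
  · rw [nonsing_inv_apply_not_isUnit _ hA, zero_mulVec, dotProduct_zero]
    exact sum_nonneg fun i _ => div_nonneg (hπ i) (hγ i).le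

/-- The steady-state mean is at most the static value:
`πᵀ(D - cQ)⁻¹𝟙 ≤ πᵀD⁻¹𝟙 = Σᵢ πᵢ/γᵢ`. -/
theorem meq_le_static {n : ℕ} (Q : Matrix (Fin n) (Fin n) ℝ) (γ π : Fin n → ℝ)
    (hoff : ∀ i j, i ≠ j → 0 ≤ Q i j) (hrow : ∀ i, ∑ j, Q i j = 0)
    (hirr : IsIrreducibleRateMatrix Q) (hγ : ∀ i, 0 < γ i)
    (hπ : ∀ i, 0 ≤ π i) (hπsum : ∑ i, π i = 1)
    (hπstat : ∀ j, ∑ i, π i * Q i j = 0)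
    (c : ℝ) (hc : 0 ≤ c) :
    π ⬝ᵥ ((Matrix.diagonal γ - c • Q)⁻¹ *ᵥ fun _ => 1) ≤ ∑ i, π i / γ i :=
  meq_le_static_general Q γ π hoff hrow hγ hπ hπstat c hc
end

section
/- Let Q be an irreducible n×n transition rate matrix with stationary distribution π, D = Diag(γ₁,...,γₙ) with γᵢ > 0. Then lim_{c→∞} πᵀ(D - cQ)⁻¹𝟙 = 1/(Σᵢ πᵢγᵢ) and πᵀ(D - 0·Q)⁻¹𝟙 = Σᵢ πᵢ/γᵢ. -/
/-!
Let `D = diagonal γ` and `x c = (D - c Q)⁻¹ 𝟙`. At a maximum `i` of a vector `v`, nonnegative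
off-diagonal entries and zero row sums give `(Q v) i ≤ 0`; this maximum principle makes `D - c Q`
invertible for `c ≥ 0` and bounds `0 ≤ x c ≤ ∑ₖ 1/γₖ`. Since `πᵀ Q = 0`, we have
`(π * γ) ⬝ x c = π ⬝ (D - c Q) x c = 1`, while `Q x c = (D x c - 𝟙) / c → 0`. Irreducibility
makes `ker Q` the constants, so the rank-one perturbation `A = Q + 𝟙 (π * γ)ᵀ` is invertible, and
`A x c = Q x c + 𝟙` gives `x c = A⁻¹ (Q x c + 𝟙) → A⁻¹ 𝟙 = 𝟙 / (π ⬝ γ)`.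
-/

open Matrix Filter

open Topology

lemma Matrix.isUnit_of_forall_mulVec_eq_zero {ι K : Type*} [Fintype ι] [DecidableEq ι] [Field K]
    {M : Matrix ι ι K} (h : ∀ v, M *ᵥ v = 0 → v = 0) : IsUnit M :=
  mulVec_injective_iff_isUnit.1 <| (injective_iff_map_eq_zero M.mulVecLin).2 h

section RateMatrix

variable {ι : Type*} {Q : Matrix ι ι ℝ}

lemma mul_sub_nonpos_of_forall_le (hoff : ∀ i j, i ≠ j → 0 ≤ Q i j) {v : ι → ℝ} {i : ι}
    (hmax : ∀ j, v j ≤ v i) (j : ι) : Q i j * (v j - v i) ≤ 0 := by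
  rcases eq_or_ne j i with rfl | hji
  · simp
  · exact mul_nonpos_of_nonneg_of_nonpos (hoff i j hji.symm) (sub_nonpos.2 (hmax j))

variable [Fintype ι]

lemma mulVec_apply_eq_sum_mul_sub (hrow : ∀ i, ∑ j, Q i j = 0) (v : ι → ℝ) (i : ι) :
    (Q *ᵥ v) i = ∑ j, Q i j * (v j - v i) := by
  simp [mulVec, dotProduct, mul_sub, Finset.sum_sub_distrib, ← Finset.sum_mul, hrow i]

lemma mulVec_apply_nonpos_of_forall_le (hoff : ∀ i j, i ≠ j → 0 ≤ Q i j)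
    (hrow : ∀ i, ∑ j, Q i j = 0) {v : ι → ℝ} {i : ι} (hmax : ∀ j, v j ≤ v i) :
    (Q *ᵥ v) i ≤ 0 := by
  rw [mulVec_apply_eq_sum_mul_sub hrow]
  exact Finset.sum_nonpos fun j _ => mul_sub_nonpos_of_forall_le hoff hmax j

lemma mulVec_apply_neg_of_forall_le (hoff : ∀ i j, i ≠ j → 0 ≤ Q i j)
    (hrow : ∀ i, ∑ j, Q i j = 0) {v : ι → ℝ} {i k : ι} (hmax : ∀ j, v j ≤ v i)
    (hQ : Q i k ≠ 0) (hk : v k < v i) : (Q *ᵥ v) i < 0 := by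
  have hki : k ≠ i := by rintro rfl; exact hk.false
  have hterm : Q i k * (v k - v i) < 0 :=
    mul_neg_of_pos_of_neg ((hoff i k hki.symm).lt_of_ne' hQ) (sub_neg.2 hk)
  rw [mulVec_apply_eq_sum_mul_sub hrow]
  simpa using Finset.sum_lt_sum (g := fun _ => (0 : ℝ))
    (fun j _ => mul_sub_nonpos_of_forall_le hoff hmax j) ⟨k, Finset.mem_univ k, hterm⟩

lemma add_vecMulVec_one_mulVec (w v : ι → ℝ) :
    (Q + vecMulVec 1 w) *ᵥ v = Q *ᵥ v + (w ⬝ᵥ v) • 1 := by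
  rw [add_mulVec, vecMulVec_mulVec, op_smul_eq_smul]

variable [DecidableEq ι] {γ : ι → ℝ} {c : ℝ}

lemma diagonal_sub_smul_mulVec_apply (γ : ι → ℝ) (c : ℝ) (v : ι → ℝ) (i : ι) :
    ((diagonal γ - c • Q) *ᵥ v) i = γ i * v i - c * (Q *ᵥ v) i := by
  simp [sub_mulVec, smul_mulVec, mulVec_diagonal]

lemma le_of_diagonal_sub_smul_mulVec_le (hoff : ∀ i j, i ≠ j → 0 ≤ Q i j)
    (hrow : ∀ i, ∑ j, Q i j = 0) (hγ : ∀ i, 0 < γ i) (hc : 0 ≤ c) {v : ι → ℝ} {a : ℝ}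
    (h : ∀ i, ((diagonal γ - c • Q) *ᵥ v) i ≤ a * γ i) (j : ι) : v j ≤ a := by
  have : Nonempty ι := ⟨j⟩
  obtain ⟨i, hi⟩ := Finite.exists_max v
  have hvi : γ i * v i ≤ γ i * a := by
    have hMv := h i
    rw [diagonal_sub_smul_mulVec_apply] at hMv
    linarith [mul_nonpos_of_nonneg_of_nonpos hc (mulVec_apply_nonpos_of_forall_le hoff hrow hi)]
  exact (hi j).trans (le_of_mul_le_mul_left hvi (hγ i))

lemma isUnit_diagonal_sub_smul (hoff : ∀ i j, i ≠ j → 0 ≤ Q i j)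
    (hrow : ∀ i, ∑ j, Q i j = 0) (hγ : ∀ i, 0 < γ i) (hc : 0 ≤ c) :
    IsUnit (diagonal γ - c • Q) := by
  refine isUnit_of_forall_mulVec_eq_zero fun v hv => funext fun j => le_antisymm ?_ ?_
  · exact le_of_diagonal_sub_smul_mulVec_le hoff hrow hγ hc (a := 0) (by simp [hv]) j
  · refine neg_nonpos.1 (le_of_diagonal_sub_smul_mulVec_le hoff hrow hγ hc (v := -v) (a := 0) ?_ j)
    simp [mulVec_neg, hv]

lemma mem_Icc_of_diagonal_sub_smul_mulVec_eq_one (hoff : ∀ i j, i ≠ j → 0 ≤ Q i j)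
    (hrow : ∀ i, ∑ j, Q i j = 0) (hγ : ∀ i, 0 < γ i) (hc : 0 ≤ c) {v : ι → ℝ}
    (hv : (diagonal γ - c • Q) *ᵥ v = 1) (j : ι) : v j ∈ Set.Icc 0 (∑ k, (γ k)⁻¹) := by
  refine ⟨neg_nonpos.1 (le_of_diagonal_sub_smul_mulVec_le hoff hrow hγ hc (v := -v) (a := 0) ?_ j),
    le_of_diagonal_sub_smul_mulVec_le hoff hrow hγ hc (fun i => ?_) j⟩
  · simp [mulVec_neg, hv]
  · have hinv : (γ i)⁻¹ ≤ ∑ k, (γ k)⁻¹ :=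
      Finset.single_le_sum (fun k _ => (inv_pos.2 (hγ k)).le) (Finset.mem_univ i)
    calc ((diagonal γ - c • Q) *ᵥ v) i = (γ i)⁻¹ * γ i := by simp [hv, (hγ i).ne']
      _ ≤ (∑ k, (γ k)⁻¹) * γ i := by gcongr; exact (hγ i).le

lemma dotProduct_diagonal_sub_smul_mulVec {π : ι → ℝ} (hπ : π ᵥ* Q = 0) (γ : ι → ℝ) (c : ℝ)
    (v : ι → ℝ) : π ⬝ᵥ ((diagonal γ - c • Q) *ᵥ v) = (π * γ) ⬝ᵥ v := by
  rw [dotProduct_mulVec, vecMul_sub, vecMul_smul, hπ, smul_zero, sub_zero]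
  congr 1
  exact funext (vecMul_diagonal π γ)

lemma tendsto_mulVec_atTop_zero (hoff : ∀ i j, i ≠ j → 0 ≤ Q i j)
    (hrow : ∀ i, ∑ j, Q i j = 0) (hγ : ∀ i, 0 < γ i) {x : ℝ → ι → ℝ}
    (hx : ∀ c, 0 ≤ c → (diagonal γ - c • Q) *ᵥ x c = 1) :
    Tendsto (fun c => Q *ᵥ x c) atTop (𝓝 0) := by
  refine tendsto_pi_nhds.2 fun i => ?_
  have hbdd : IsBoundedUnder (· ≤ ·) atTop fun c => ‖γ i * x c i - 1‖ := by
    refine isBoundedUnder_of_eventually_le (a := γ i * ∑ k, (γ k)⁻¹ + 1) ?_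
    filter_upwards [eventually_ge_atTop 0] with c hc
    obtain ⟨h0, h1⟩ := mem_Icc_of_diagonal_sub_smul_mulVec_eq_one hoff hrow hγ hc (hx c hc) i
    rw [Real.norm_eq_abs, abs_le]
    constructor <;> nlinarith [hγ i]
  refine (tendsto_inv_atTop_zero.zero_mul_isBoundedUnder_le hbdd).congr' ?_
  filter_upwards [eventually_gt_atTop 0] with c hc
  have := congrFun (hx c hc.le) i
  rw [diagonal_sub_smul_mulVec_apply, Pi.one_apply] at this
  field_simp
  linarith

lemma isUnit_add_vecMulVec_one {π w : ι → ℝ}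
    (hker : ∀ v, Q *ᵥ v = 0 → ∃ m, v = fun _ => m) (hπ : π ᵥ* Q = 0) (hπ1 : π ⬝ᵥ 1 ≠ 0)
    (hw : w ⬝ᵥ 1 ≠ 0) : IsUnit (Q + vecMulVec 1 w) := by
  refine isUnit_of_forall_mulVec_eq_zero fun v hv => ?_
  rw [add_vecMulVec_one_mulVec] at hv
  have hwv : w ⬝ᵥ v = 0 := by
    have := congrArg (π ⬝ᵥ ·) hv
    simp only [dotProduct_add, dotProduct_mulVec, hπ, zero_dotProduct, dotProduct_smul,
      smul_eq_mul, zero_add, dotProduct_zero] at this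
    exact (mul_eq_zero.1 this).resolve_right hπ1
  obtain ⟨m, rfl⟩ := hker v (by simpa [hwv] using hv)
  have : m * (w ⬝ᵥ 1) = 0 := by
    rw [← hwv]; simp [dotProduct, Finset.mul_sum, mul_comm]
  exact funext fun _ => (mul_eq_zero.1 this).resolve_right hw

lemma inv_add_vecMulVec_one_mulVec_one (hrow : ∀ i, ∑ j, Q i j = 0) {w : ι → ℝ}
    (hA : IsUnit (Q + vecMulVec 1 w)) (hw : w ⬝ᵥ 1 ≠ 0) :
    (Q + vecMulVec 1 w)⁻¹ *ᵥ 1 = (w ⬝ᵥ 1)⁻¹ • 1 := by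
  have hQ1 : Q *ᵥ 1 = 0 := funext fun i => by simpa [mulVec, dotProduct] using hrow i
  have := hA.invertible
  refine inv_mulVec_eq_vec ?_
  rw [add_vecMulVec_one_mulVec, mulVec_smul, hQ1, smul_zero, zero_add, dotProduct_smul,
    smul_eq_mul, inv_mul_cancel₀ hw, one_smul]

theorem tendsto_diagonal_sub_smul_inv_mulVec_one (hoff : ∀ i j, i ≠ j → 0 ≤ Q i j)
    (hrow : ∀ i, ∑ j, Q i j = 0) (hker : ∀ v, Q *ᵥ v = 0 → ∃ m, v = fun _ => m)
    (hγ : ∀ i, 0 < γ i) {π : ι → ℝ} (hπ : π ᵥ* Q = 0) (hπ1 : π ⬝ᵥ 1 = 1)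
    (hπγ : π ⬝ᵥ γ ≠ 0) :
    Tendsto (fun c : ℝ => (diagonal γ - c • Q)⁻¹ *ᵥ 1) atTop (𝓝 ((π ⬝ᵥ γ)⁻¹ • 1)) := by
  set A := Q + vecMulVec 1 (π * γ)
  have hw : (π * γ) ⬝ᵥ 1 = π ⬝ᵥ γ := by simp [dotProduct]
  have hA : IsUnit A := isUnit_add_vecMulVec_one hker hπ (by simp [hπ1]) (hw ▸ hπγ)
  set x := fun c : ℝ => (diagonal γ - c • Q)⁻¹ *ᵥ 1
  have hx : ∀ c, 0 ≤ c → (diagonal γ - c • Q) *ᵥ x c = 1 := fun c hc => by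
    rw [mulVec_mulVec, mul_nonsing_inv _
      ((isUnit_iff_isUnit_det _).1 (isUnit_diagonal_sub_smul hoff hrow hγ hc)), one_mulVec]
  have hxA : ∀ c, 0 ≤ c → A⁻¹ *ᵥ (Q *ᵥ x c + 1) = x c := fun c hc => by
    have hwx : (π * γ) ⬝ᵥ x c = 1 := by
      rw [← dotProduct_diagonal_sub_smul_mulVec hπ γ c, hx c hc, hπ1]
    have := hA.invertible
    refine inv_mulVec_eq_vec ?_
    rw [add_vecMulVec_one_mulVec, hwx, one_smul]
  have hlim : Tendsto (fun c => A⁻¹ *ᵥ (Q *ᵥ x c + 1)) atTop (𝓝 (A⁻¹ *ᵥ (0 + 1))) :=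
    ((continuous_const.matrix_mulVec (continuous_id.add continuous_const)).tendsto 0).comp
      (tendsto_mulVec_atTop_zero hoff hrow hγ hx)
  rw [zero_add, inv_add_vecMulVec_one_mulVec_one hrow hA (hw ▸ hπγ), hw] at hlim
  exact hlim.congr' ((eventually_ge_atTop 0).mono hxA)

end RateMatrix

lemma IsIrreducibleRateMatrix.exists_eq_const_of_mulVec_eq_zero {n : ℕ}
    {Q : Matrix (Fin n) (Fin n) ℝ} (hirr : IsIrreducibleRateMatrix Q)
    (hoff : ∀ i j, i ≠ j → 0 ≤ Q i j) (hrow : ∀ i, ∑ j, Q i j = 0) {v : Fin n → ℝ}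
    (hv : Q *ᵥ v = 0) : ∃ m, v = fun _ => m := by
  rcases isEmpty_or_nonempty (Fin n) with hn | hn
  · exact ⟨0, funext isEmptyElim⟩
  obtain ⟨i₀, hi₀⟩ := Finite.exists_max v
  refine ⟨v i₀, funext fun j => by_contra fun hj => ?_⟩
  set S := Finset.univ.filter fun k => v k = v i₀
  have hSuniv : S ≠ Finset.univ := fun h => hj (by simpa [S] using Finset.eq_univ_iff_forall.1 h j)
  obtain ⟨i, hi, k, hk, hQ⟩ := hirr S ⟨i₀, by simp [S]⟩ hSuniv
  simp only [S, Finset.mem_filter, Finset.mem_univ, true_and] at hi hk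
  have := mulVec_apply_neg_of_forall_le hoff hrow (fun j => hi ▸ hi₀ j) hQ
    (hi ▸ (hi₀ k).lt_of_ne hk)
  simp [hv] at this

/-- The two endpoints of the steady-state mean: the deterministic value as `c → ∞`
and the static value at `c = 0`. -/
theorem meq_endpoints {n : ℕ} (Q : Matrix (Fin n) (Fin n) ℝ) (γ π : Fin n → ℝ)
    (hoff : ∀ i j, i ≠ j → 0 ≤ Q i j) (hrow : ∀ i, ∑ j, Q i j = 0)
    (hirr : IsIrreducibleRateMatrix Q) (hγ : ∀ i, 0 < γ i)
    (hπ : ∀ i, 0 ≤ π i) (hπsum : ∑ i, π i = 1)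
    (hπstat : ∀ j, ∑ i, π i * Q i j = 0) :
    Tendsto (fun c : ℝ => π ⬝ᵥ ((Matrix.diagonal γ - c • Q)⁻¹ *ᵥ fun _ => 1))
        atTop (nhds (∑ i, π i * γ i)⁻¹) ∧
      π ⬝ᵥ ((Matrix.diagonal γ - (0:ℝ) • Q)⁻¹ *ᵥ fun _ => 1) = ∑ i, π i / γ i := by
  have hπ1 : π ⬝ᵥ 1 = 1 := (dotProduct_one π).trans hπsum
  have hπγ : 0 < π ⬝ᵥ γ := by
    obtain ⟨j, -, hj⟩ := (Finset.sum_pos_iff_of_nonneg fun i _ => hπ i).1 (hπsum ▸ one_pos)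
    exact (Finset.sum_pos_iff_of_nonneg fun i _ => mul_nonneg (hπ i) (hγ i).le).2
      ⟨j, Finset.mem_univ j, mul_pos hj (hγ j)⟩
  refine ⟨?_, ?_⟩
  · have hx := tendsto_diagonal_sub_smul_inv_mulVec_one hoff hrow
      (fun _ => hirr.exists_eq_const_of_mulVec_eq_zero hoff hrow) hγ (funext hπstat) hπ1 hπγ.ne'
    have hdot := ((continuous_const (y := π)).dotProduct continuous_id).tendsto
      ((π ⬝ᵥ γ)⁻¹ • (1 : Fin n → ℝ))
    rw [id, dotProduct_smul, hπ1, smul_eq_mul, mul_one] at hdot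
    exact hdot.comp hx
  · have hD : (diagonal γ)⁻¹ = diagonal γ⁻¹ := inv_eq_left_inv <| by
      rw [diagonal_mul_diagonal, ← diagonal_one]
      exact congrArg diagonal (funext fun i => inv_mul_cancel₀ (hγ i).ne')
    simp [hD, mulVec_diagonal, dotProduct, div_eq_mul_inv]
end

section
/- For the two-state enzyme model with rates k_in, γ₀, γ₁, k_on, k_off > 0, the steady-state substrate mean at relative speed c, given by m_eq(c) = k_in·πᵀ(D - cQ)⁻¹𝟙 with D = Diag(γ₀,γ₁), Q = [[-k_on,k_on],[k_off,-k_off]], π = (k_off, k_on)/(k_on+k_off), equals k_in·(γ₁k_off + γ₀k_on + c(k_on+k_off)²) / ((γ₀γ₁ + cγ₀k_off + cγ₁k_on)(k_on+k_off)). -/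
open Matrix

/-! The inverse of a `2 × 2` matrix is its adjugate divided by its determinant, so the mean
is `πᵀ adj(D - cQ) 𝟙 / det(D - cQ)`. The row sums of `adj(D - cQ)` are `γ₁ + c s` and
`γ₀ + c s` with `s = k_on + k_off`, and pairing them with `π` gives the numerator. -/

theorem Matrix.dotProduct_inv_mulVec {n K : Type*} [Fintype n] [DecidableEq n] [Field K]
    (A : Matrix n n K) (u v : n → K) :
    u ⬝ᵥ (A⁻¹ *ᵥ v) = (u ⬝ᵥ (A.adjugate *ᵥ v)) / A.det := by
  rw [inv_def, Ring.inverse_eq_inv', smul_mulVec, dotProduct_smul, smul_eq_mul, div_eq_inv_mul]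

section TwoState

variable {R : Type*} [CommRing R] (γ0 γ1 a b c : R)

abbrev twoStateGenerator : Matrix (Fin 2) (Fin 2) R :=
  of ![![-a, a], ![b, -b]]

theorem diagonal_sub_smul_twoStateGenerator :
    diagonal ![γ0, γ1] - c • twoStateGenerator a b
      = !![γ0 + c * a, -(c * a); -(c * b), γ1 + c * b] := by
  ext i j
  fin_cases i <;> fin_cases j <;> simp

theorem det_diagonal_sub_smul_twoStateGenerator :
    (diagonal ![γ0, γ1] - c • twoStateGenerator a b).det
      = γ0 * γ1 + c * γ0 * b + c * γ1 * a := by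
  rw [diagonal_sub_smul_twoStateGenerator, det_fin_two_of]
  ring

theorem adjugate_diagonal_sub_smul_twoStateGenerator_mulVec_one :
    (diagonal ![γ0, γ1] - c • twoStateGenerator a b).adjugate *ᵥ (fun _ => 1)
      = ![γ1 + c * (a + b), γ0 + c * (a + b)] := by
  rw [diagonal_sub_smul_twoStateGenerator, adjugate_fin_two_of]
  ext i
  fin_cases i <;> simp only [mulVec, dotProduct, Fin.sum_univ_two, Fin.zero_eta, Fin.mk_one, of_apply,
    cons_val', cons_val_zero, cons_val_one, cons_val_fin_one, mul_one] <;> ring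

end TwoState

theorem two_state_meq_general (kin γ0 γ1 kon koff c : ℝ) :
    kin * (![koff / (kon + koff), kon / (kon + koff)] ⬝ᵥ
        ((Matrix.diagonal ![γ0, γ1]
            - c • Matrix.of ![![-kon, kon], ![koff, -koff]])⁻¹ *ᵥ fun _ => 1))
      = kin * (γ1 * koff + γ0 * kon + c * (kon + koff) ^ 2)
          / ((γ0 * γ1 + c * γ0 * koff + c * γ1 * kon) * (kon + koff)) := by
  rw [dotProduct_inv_mulVec, det_diagonal_sub_smul_twoStateGenerator,
    adjugate_diagonal_sub_smul_twoStateGenerator_mulVec_one]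
  have hpair : ![koff / (kon + koff), kon / (kon + koff)]
      ⬝ᵥ ![γ1 + c * (kon + koff), γ0 + c * (kon + koff)]
      = (γ1 * koff + γ0 * kon + c * (kon + koff) ^ 2) / (kon + koff) := by
    simp only [dotProduct, Fin.sum_univ_two, cons_val_zero, cons_val_one]
    ring
  rw [hpair, div_div, mul_comm (kon + koff), mul_div_assoc]

/-- Closed form for the steady-state substrate mean of the two-state enzyme model:
`m_eq(c) = k_in πᵀ(D - cQ)⁻¹𝟙`. -/
theorem two_state_meq (kin γ0 γ1 kon koff c : ℝ)
    (hkin : 0 < kin) (h0 : 0 < γ0) (h1 : 0 < γ1)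
    (hon : 0 < kon) (hoff : 0 < koff) (hc : 0 ≤ c) :
    kin * (![koff / (kon + koff), kon / (kon + koff)] ⬝ᵥ
        ((Matrix.diagonal ![γ0, γ1]
            - c • Matrix.of ![![-kon, kon], ![koff, -koff]])⁻¹ *ᵥ fun _ => 1))
      = kin * (γ1 * koff + γ0 * kon + c * (kon + koff) ^ 2)
          / ((γ0 * γ1 + c * γ0 * koff + c * γ1 * kon) * (kon + koff)) :=
  two_state_meq_general kin γ0 γ1 kon koff c
end

section
/- For the two-state enzyme model, the maximum relative amplification factor ρ_max := m_eq^(static)/m_eq^(det) - 1 equals k_on·k_off·(γ₀-γ₁)²/((k_on+k_off)²·γ₀γ₁), which equals Var_π(γ)/(γ₀γ₁). -/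
/-!
Writing `π = (k_off, k_on)/(k_on + k_off)` for the stationary law of the switching chain,
`m_det = k_in / E_π[γ]` and `m_static = k_in E_π[1/γ]`, so `ρ_max = E_π[γ] E_π[1/γ] - 1`.
For a two-point law this product exceeds `1` by exactly `Var_π(γ)/(γ₀γ₁)`.
-/

theorem two_point_mean_mul_mean_inv_sub_one {K : Type*} [Field K] {p q x y : K}
    (hpq : p + q = 1) (hx : x ≠ 0) (hy : y ≠ 0) :
    (p * x + q * y) * (p / x + q / y) - 1 = p * q * (x - y) ^ 2 / (x * y) := by
  obtain rfl : q = 1 - p := eq_sub_of_add_eq' hpq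
  field_simp
  ring

/-- The maximum relative amplification factor for the two-state enzyme model:
`ρ_max = m_static/m_det - 1 = k_on k_off (γ₀-γ₁)²/((k_on+k_off)² γ₀γ₁) = Var_π(γ)/(γ₀γ₁)`. -/
theorem two_state_rho_max (kin γ0 γ1 kon koff : ℝ)
    (hkin : 0 < kin) (h0 : 0 < γ0) (h1 : 0 < γ1)
    (hon : 0 < kon) (hoff : 0 < koff) :
    let mdet := kin * (kon + koff) / (γ0 * koff + γ1 * kon)
    let mstatic := kin * (γ1 * koff + γ0 * kon) / (γ0 * γ1 * (kon + koff))
    let varγ := kon * koff * (γ0 - γ1) ^ 2 / (kon + koff) ^ 2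
    mstatic / mdet - 1 = kon * koff * (γ0 - γ1) ^ 2 / ((kon + koff) ^ 2 * (γ0 * γ1)) ∧
      mstatic / mdet - 1 = varγ / (γ0 * γ1) := by
  intro mdet mstatic varγ
  have hk : kon + koff ≠ 0 := by positivity
  set π0 := koff / (kon + koff)
  set π1 := kon / (kon + koff)
  have hπ : π0 + π1 = 1 := by rw [← add_div, add_comm, div_self hk]
  have hdet : mdet = kin / (π0 * γ0 + π1 * γ1) := by
    simp only [mdet, π0, π1]; field_simp
  have hstatic : mstatic = kin * (π0 / γ0 + π1 / γ1) := by
    simp only [mstatic, π0, π1]; field_simp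
  have hratio : mstatic / mdet = (π0 * γ0 + π1 * γ1) * (π0 / γ0 + π1 / γ1) := by
    rw [hdet, hstatic]; field_simp
  have hρ : mstatic / mdet - 1 = varγ / (γ0 * γ1) := by
    rw [hratio, two_point_mean_mul_mean_inv_sub_one hπ h0.ne' h1.ne']
    simp only [varγ, π0, π1]; field_simp
  exact ⟨by rw [hρ, div_div], hρ⟩
end
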